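/- arXiv:1101.3088 — 6 statements merged into one kernel-verified Lean document; each statement's English description precedes it below -/
import Mathlib

section
/- Let N be a finite-dimensional commutative nilpotent algebra over a field F of characteristic zero, and let π : N → N be a linear projection with range equal to the annihilator Ann(N) = {x ∈ N : xN = 0}. Then the radical of the symmetric bilinear form b_π(x,y) := π(xy) equals Ann(N); in particular b_π induces a non-degenerate symmetric bilinear form on N/Ann(N). -/
/-- `pw F N k` is the characteristic ideal `N^k`. -/
def pw (F N : Type*) [Field F] [NonUnitalNonAssocRing N] [Module F N] : ℕ → Submodule F N
  | 0 => ⊤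
  | 1 => ⊤
  | (k+2) => Submodule.span F {z : N | ∃ x : N, ∃ y ∈ pw F N (k+1), z = x * y}

/-- The annihilator `Ann(N) = {x | x·N = 0}` of a commutative algebra `N`. -/
def annSub (F N : Type*) [Field F] [NonUnitalCommRing N] [Module F N]
    [SMulCommClass F N N] [IsScalarTower F N N] : Submodule F N where
  carrier := {x | ∀ y : N, x * y = 0}
  add_mem' := by intro a b ha hb y; simp [add_mul, ha y, hb y]
  zero_mem' := by intro y; simp
  smul_mem' := by intro c x hx y; rw [smul_mul_assoc, hx y, smul_zero]

/-- For a finite-dimensional commutative nilpotent algebra `N` over a field of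
characteristic zero and a linear projection `π` with range `Ann(N)`, the radical of the
symmetric bilinear form `b_π(x,y) = π(x·y)` equals `Ann(N)`. -/
theorem stmt2 {F N : Type*} [Field F] [CharZero F] [NonUnitalCommRing N] [Module F N]
    [SMulCommClass F N N] [IsScalarTower F N N] [FiniteDimensional F N]
    (hnil : ∃ m : ℕ, pw F N (m + 1) = ⊥)
    (π : N →ₗ[F] N) (hproj : π ∘ₗ π = π) (hrange : LinearMap.range π = annSub F N) :
    ∀ x : N, (∀ y : N, π (x * y) = 0) ↔ x ∈ annSub F N := by
  classical
  have hfix : ∀ a : N, a ∈ annSub F N → π a = a := by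
    intro a ha
    rw [← hrange] at ha
    obtain ⟨b, rfl⟩ := ha
    exact LinearMap.ext_iff.mp hproj b
  intro x
  constructor
  · intro hx
    by_contra hxa
    obtain ⟨m, hm⟩ := hnil
    let P : ℕ → Prop := fun k => ∀ y ∈ pw F N (k+1), x * y = 0
    have hex : ∃ k, P k := by
      refine ⟨m, fun y hy => ?_⟩
      rw [hm, Submodule.mem_bot] at hy
      simp [hy]
    let k := Nat.find hex
    have hk : P k := Nat.find_spec hex
    have hkpos : k ≠ 0 := by
      intro h
      apply hxa
      intro y
      have := hk y
      rw [h] at this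
      exact this (by trivial)
    obtain ⟨j, hj⟩ : ∃ j, k = j + 1 := ⟨k - 1, (Nat.succ_pred_eq_of_pos (Nat.pos_of_ne_zero hkpos)).symm⟩
    have hnot : ¬ P j := Nat.find_min hex (by omega)
    obtain ⟨y, hy, hxy⟩ : ∃ y ∈ pw F N (j + 1), x * y ≠ 0 := by
      by_contra h
      push_neg at h
      exact hnot fun y hy => h y hy
    have hann : x * y ∈ annSub F N := by
      intro z
      have hyz : y * z ∈ pw F N (j + 2) := by
        rw [mul_comm]
        exact Submodule.subset_span ⟨z, y, hy, rfl⟩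
      have := hk (y * z) (by rw [hj]; exact hyz)
      rw [← mul_assoc] at this
      exact this
    have := hfix _ hann
    rw [hx y] at this
    exact hxy this.symm
  · intro hx y
    have : x * y = 0 := hx y
    rw [this, map_zero]
end

section
/- Let N be a finite-dimensional commutative nilpotent algebra over F (char 0), π a projection on N with range the annihilator Ann(N), and suppose λ ∈ End(N) satisfies λ(N) ⊆ Ann(N) and λ(N²) = 0. Then for every a ∈ N_{[3]} = {x ∈ N : x·N³ = 0}, the linear map D(x) = a x + π(a x) + λ(x) is a derivation of N. -/
/-- Let `N` be a finite-dimensional commutative nilpotent algebra over `F`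
(char 0), `π` a projection with range `Ann(N)`, and `λ ∈ End(N)` with `λ(N) ⊆ Ann(N)` and
`λ(N²) = 0`.  Then for every `a ∈ N_{[3]} = {x | x·N³ = 0}` the map
`D(x) = a·x + π(a·x) + λ(x)` is a derivation of `N`. -/
theorem stmt3 {F N : Type*} [Field F] [CharZero F] [NonUnitalCommRing N] [Module F N]
    [SMulCommClass F N N] [IsScalarTower F N N] [FiniteDimensional F N]
    (hnil : ∃ m : ℕ, pw F N (m + 1) = ⊥)
    (π : N →ₗ[F] N) (hproj : π ∘ₗ π = π) (hrange : LinearMap.range π = annSub F N)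
    (l : N →ₗ[F] N) (hl1 : ∀ x : N, l x ∈ annSub F N) (hl2 : ∀ x y : N, l (x * y) = 0)
    (a : N) (ha : ∀ y ∈ pw F N 3, a * y = 0) :
    ∀ x y : N,
      a * (x * y) + π (a * (x * y)) + l (x * y)
        = (a * x + π (a * x) + l x) * y + x * (a * y + π (a * y) + l y) := by
  intro x y
  have hAnn : a * (x * y) ∈ annSub F N := by
    intro z
    have h3 : z * (x * y) ∈ pw F N 3 :=
      Submodule.subset_span ⟨z, x * y, Submodule.subset_span ⟨x, y, Submodule.mem_top, rfl⟩, rfl⟩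
    calc a * (x * y) * z = a * (z * (x * y)) := by rw [mul_assoc, mul_comm (x * y) z]
      _ = 0 := ha _ h3
  have hfix : π (a * (x * y)) = a * (x * y) := by
    rw [← hrange] at hAnn
    obtain ⟨w, hw⟩ := hAnn
    rw [← hw, ← LinearMap.comp_apply, hproj]
  have hπ : ∀ w : N, ∀ z : N, π w * z = 0 := by
    intro w z
    have : π w ∈ annSub F N := hrange ▸ ⟨w, rfl⟩
    exact this z
  have e1 : l x * y = 0 := hl1 x y
  have e2 : x * l y = 0 := by rw [mul_comm]; exact hl1 y x
  have e3 : x * π (a * y) = 0 := by rw [mul_comm]; exact hπ _ _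
  rw [hl2, hfix, add_mul, add_mul, mul_add, mul_add, e1, e2, e3, hπ]
  simp only [add_zero]
  rw [mul_assoc, mul_left_comm x a y]
end

section
/- Let N be a finite-dimensional commutative nilpotent algebra over F (char 0), π a projection on N with range in the annihilator Ann(N), ρ := (id + π)/2, and f := π ∘ exp₁ where exp₁(x) = Σ_{k≥1} x^k/k!. For a ∈ N_{[3]} = {x : xN³ = 0} with f(a) = 0, define h_a(x) := x − ρ(a x) + a. Then h_a is an invertible affine map of N satisfying f ∘ h_a = f. -/
/-- `npw x k = x^(k+1)` in a non-unital ring. -/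
def npw {N : Type*} [Mul N] (x : N) : ℕ → N
  | 0 => x
  | (k+1) => x * npw x k

/-- The truncated exponential `exp₁ x = Σ_{k=1}^{m} x^k/k!` (truncation level `m`,
a faithful rendering of `exp₁` on an algebra with `N^{m+1} = 0`). -/
noncomputable def exp1 (F : Type*) {N : Type*} [Field F] [NonUnitalNonAssocRing N]
    [Module F N] (m : ℕ) (x : N) : N :=
  ∑ k ∈ Finset.range m, ((Nat.factorial (k + 1) : F))⁻¹ • npw x k

section Filtration

variable {F N : Type*} [Field F] [NonUnitalNonAssocRing N] [Module F N]

lemma mul_mem_pw (x : N) {k : ℕ} {y : N} (hy : y ∈ pw F N (k + 1)) : x * y ∈ pw F N (k + 2) :=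
  Submodule.subset_span ⟨x, y, hy, rfl⟩

lemma mul_mem_pw_two (x y : N) : x * y ∈ pw F N 2 :=
  mul_mem_pw (k := 0) x Submodule.mem_top

lemma mul_mul_mem_pw_three (x y z : N) : x * (y * z) ∈ pw F N 3 :=
  mul_mem_pw x (mul_mem_pw_two y z)

lemma pw_antitone : Antitone (pw F N) := by
  refine antitone_nat_of_succ_le fun m => ?_
  induction m with
  | zero => exact le_top
  | succ k ih =>
    cases k with
    | zero => exact le_top
    | succ k =>
      refine Submodule.span_le.2 ?_
      rintro _ ⟨x, y, hy, rfl⟩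
      exact mul_mem_pw x (ih hy)

lemma npw_mem_pw (x : N) (k : ℕ) : npw x k ∈ pw F N (k + 1) := by
  induction k with
  | zero => exact Submodule.mem_top
  | succ k ih => exact mul_mem_pw x ih

lemma npw_eq_zero {ν : ℕ} (hnil : pw F N (ν + 1) = ⊥) (x : N) {k : ℕ} (hk : ν ≤ k) :
    npw x k = 0 := by
  simpa [hnil] using pw_antitone (by omega : ν + 1 ≤ k + 1) (npw_mem_pw (F := F) x k)

lemma exp1_eq_of_le {ν m : ℕ} (hnil : pw F N (ν + 1) = ⊥) (h : ν ≤ m) (x : N) :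
    exp1 F m x = exp1 F ν x := by
  refine (Finset.sum_subset (Finset.range_subset_range.2 h) fun k _ hk => ?_).symm
  rw [npw_eq_zero hnil x (by simpa using hk), smul_zero]

end Filtration

section Expansion

variable {F N : Type*} [Field F] [NonUnitalRing N] [Module F N] [SMulCommClass F N N]

lemma exists_exp1_eq (m : ℕ) (u : N) :
    ∃ s, exp1 F (m + 2) u = u + (2 : F)⁻¹ • (u * u) + u * (u * s) := by
  refine ⟨∑ k ∈ Finset.range m, ((Nat.factorial (k + 3) : F))⁻¹ • npw u k, ?_⟩
  rw [exp1, Finset.sum_range_succ', Finset.sum_range_succ', Finset.mul_sum, Finset.mul_sum]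
  simp only [npw, mul_smul_comm]
  norm_num [Nat.factorial]
  abel

lemma exp1_eq_self_of_mul_self_eq_zero (m : ℕ) {u : N} (hu : u * u = 0) :
    exp1 F (m + 2) u = u := by
  obtain ⟨s, hs⟩ := exists_exp1_eq (F := F) m u
  rw [hs, ← mul_assoc, hu, zero_mul, smul_zero, add_zero, add_zero]

end Expansion

section Unitization

variable {F N : Type*} [Field F] [NonUnitalCommRing N] [Module F N]
  [SMulCommClass F N N] [IsScalarTower F N N]

lemma inr_npw (x : N) (k : ℕ) :
    ((npw x k : N) : Unitization F N) = (x : Unitization F N) ^ (k + 1) := by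
  induction k with
  | zero => simp [npw]
  | succ k ih => rw [npw, Unitization.inr_mul, ih, ← pow_succ']

lemma inr_pow_eq_zero {ν : ℕ} (hnil : pw F N (ν + 1) = ⊥) (x : N) :
    (x : Unitization F N) ^ (ν + 1) = 0 := by
  rw [← inr_npw, npw_eq_zero hnil x le_rfl, Unitization.inr_zero]

lemma exp1_add [CharZero F] {ν : ℕ} (hnil : pw F N (ν + 1) = ⊥) (x y : N) :
    exp1 F ν (x + y) = exp1 F ν x + exp1 F ν y + exp1 F ν x * exp1 F ν y := by
  -- with this `ℚ`-structure the coefficients of `IsNilpotent.exp` act as those of `exp1`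
  let _ : Module ℚ N := Module.compHom N (algebraMap ℚ F)
  have inr_exp1 (z : N) :
      ((exp1 F ν z : N) : Unitization F N) + 1 = IsNilpotent.exp (z : Unitization F N) := by
    change Unitization.inrHom F F N (exp1 F ν z) + 1 = _
    rw [IsNilpotent.exp_eq_sum (inr_pow_eq_zero hnil z), Finset.sum_range_succ', exp1, map_sum]
    simp only [pow_zero, Nat.factorial_zero, Nat.cast_one, inv_one, one_smul, map_smul,
      Unitization.inrHom_apply, inr_npw]
    congr 1
    refine Finset.sum_congr rfl fun k _ => ?_
    rw [← map_natCast (algebraMap ℚ F), ← map_inv₀]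
    ext
    · simp only [Unitization.fst_smul, Algebra.smul_def (R := ℚ), smul_eq_mul]
    · rfl
  apply Unitization.inr_injective (R := F)
  have := IsNilpotent.exp_add_of_commute (Commute.all (x : Unitization F N) y)
    ⟨_, inr_pow_eq_zero hnil x⟩ ⟨_, inr_pow_eq_zero hnil y⟩
  rw [← Unitization.inr_add, ← inr_exp1, ← inr_exp1, ← inr_exp1] at this
  simp only [Unitization.inr_add, Unitization.inr_mul]
  linear_combination this

end Unitization

section ThirdAnnihilator

variable {F N : Type*} [Field F] [NonUnitalCommRing N] [Module F N]
  {a : N} (ha : ∀ y ∈ pw F N 3, a * y = 0)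
include ha

lemma mul_mul_mul_eq_zero (u v w : N) : (u * v) * (a * w) = 0 := by
  rw [show (u * v) * (a * w) = a * (w * (u * v)) by ac_rfl]
  exact ha _ (mul_mul_mem_pw_three w u v)

variable [SMulCommClass F N N] [IsScalarTower F N N]

lemma exp1_mul_mul (m : ℕ) (u w : N) : exp1 F (m + 2) u * (a * w) = u * (a * w) := by
  obtain ⟨s, hs⟩ := exists_exp1_eq (F := F) m u
  rw [hs, add_mul, add_mul, smul_mul_assoc, mul_mul_mul_eq_zero ha,
    mul_mul_mul_eq_zero ha, smul_zero, add_zero, add_zero]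

lemma exp1_mul_exp1 (m : ℕ) (x : N) :
    exp1 F (m + 2) x * exp1 F (m + 2) a
      = x * a + (2 : F)⁻¹ • (a * (a * x)) + (2 : F)⁻¹ • (a * (x * x)) := by
  obtain ⟨s, hs⟩ := exists_exp1_eq (F := F) m a
  obtain ⟨r, hr⟩ := exists_exp1_eq (F := F) m x
  have hxa : exp1 F (m + 2) x * a = x * a + (2 : F)⁻¹ • (a * (x * x)) := by
    rw [hr, add_mul, add_mul, smul_mul_assoc,
      show x * (x * r) * a = a * (x * (x * r)) by ac_rfl, ha _ (mul_mul_mem_pw_three _ _ _),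
      add_zero, mul_comm (x * x)]
  rw [hs, mul_add, mul_add, mul_smul_comm, exp1_mul_mul ha, exp1_mul_mul ha, hxa,
    show x * (a * (a * s)) = a * (x * (a * s)) by ac_rfl, ha _ (mul_mul_mem_pw_three _ _ _),
    add_zero, show x * (a * a) = a * (a * x) by ac_rfl, add_right_comm]

end ThirdAnnihilator

lemma Module.End.bijective_sub_add_of_isNilpotent {R M : Type*} [Ring R] [AddCommGroup M]
    [Module R M] {T : Module.End R M} (hT : IsNilpotent T) (a : M) :
    Function.Bijective (fun x => x - T x + a) :=
  (Equiv.addRight a).bijective.comp ((Module.End.isUnit_iff _).1 hT.isUnit_one_sub)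

section Homotopy

variable {F N : Type*} [Field F] [NonUnitalCommRing N] [Module F N]
  [SMulCommClass F N N] {π : N →ₗ[F] N} {a : N}

def rhoMulLeft (π : N →ₗ[F] N) (a : N) : N →ₗ[F] N :=
  (2 : F)⁻¹ • (LinearMap.id + π) ∘ₗ LinearMap.mulLeft F a

lemma rhoMulLeft_apply (x : N) : rhoMulLeft π a x = (2 : F)⁻¹ • (a * x + π (a * x)) := rfl

lemma map_rhoMulLeft [CharZero F] (hproj : π ∘ₗ π = π) (x : N) :
    π (rhoMulLeft π a x) = π (a * x) := by
  rw [rhoMulLeft_apply, map_smul, map_add, ← LinearMap.comp_apply π π, hproj, ← two_smul F,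
    smul_smul, inv_mul_cancel₀ two_ne_zero, one_smul]

variable (hann : ∀ z y : N, π z * y = 0)
include hann

lemma mul_rhoMulLeft (u x : N) : u * rhoMulLeft π a x = (2 : F)⁻¹ • (u * (a * x)) := by
  rw [rhoMulLeft_apply, mul_smul_comm, mul_add, mul_comm u (π _), hann, add_zero]

variable (ha : ∀ y ∈ pw F N 3, a * y = 0)
include ha

lemma rhoMulLeft_pow_three : rhoMulLeft π a ^ 3 = 0 := by
  ext x
  have h : a * rhoMulLeft π a (rhoMulLeft π a x) = 0 := by
    rw [mul_rhoMulLeft hann, mul_rhoMulLeft hann, mul_smul_comm,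
      ha _ (mul_mul_mem_pw_three _ _ _), smul_zero, smul_zero]
  rw [pow_succ', pow_two, Module.End.mul_apply, Module.End.mul_apply, rhoMulLeft_apply, h,
    map_zero, add_zero, smul_zero, LinearMap.zero_apply]

lemma exp1_sub_rhoMulLeft_add [CharZero F] [IsScalarTower F N N] {m : ℕ} (hnil : pw F N (m + 3) = ⊥) (x : N) :
    exp1 F (m + 2) (x - rhoMulLeft π a x + a)
      = exp1 F (m + 2) x + exp1 F (m + 2) a + x * a - rhoMulLeft π a x := by
  set t := rhoMulLeft π a x
  have htt : t * t = 0 := by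
    rw [mul_rhoMulLeft hann, mul_comm, mul_rhoMulLeft hann, mul_mul_mul_eq_zero ha,
      smul_zero, smul_zero]
  have hat : exp1 F (m + 2) a * t = (2 : F)⁻¹ • (a * (a * x)) := by
    rw [mul_rhoMulLeft hann, exp1_mul_mul ha]
  have hxt : exp1 F (m + 2) x * t = (2 : F)⁻¹ • (a * (x * x)) := by
    rw [mul_rhoMulLeft hann, exp1_mul_mul ha, mul_left_comm]
  have hexp_sub : exp1 F (m + 2) (a - t) = exp1 F (m + 2) a - t - (2 : F)⁻¹ • (a * (a * x)) := by
    rw [sub_eq_add_neg, exp1_add hnil,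
      exp1_eq_self_of_mul_self_eq_zero (u := -t) m (by rwa [neg_mul_neg]), mul_neg, hat]
    abel
  rw [sub_add_eq_add_sub, add_sub_assoc, exp1_add hnil, hexp_sub, mul_sub, mul_sub,
    exp1_mul_exp1 ha, hxt, mul_smul_comm, exp1_mul_mul ha, mul_left_comm x a,
    ha _ (mul_mul_mem_pw_three _ _ _), smul_zero]
  abel

end Homotopy

theorem stmt6_general {F N : Type*} [Field F] [CharZero F] [NonUnitalCommRing N] [Module F N]
    [SMulCommClass F N N] [IsScalarTower F N N]
    (ν : ℕ) (hnil : pw F N (ν + 1) = ⊥)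
    (π : N →ₗ[F] N) (hproj : π ∘ₗ π = π) (hrange : LinearMap.range π ≤ annSub F N)
    (a : N) (ha : ∀ y ∈ pw F N 3, a * y = 0) (haS : π (exp1 F ν a) = 0) :
    Function.Bijective (fun x : N => x - (2 : F)⁻¹ • (a * x + π (a * x)) + a) ∧
      ∀ x : N, π (exp1 F ν (x - (2 : F)⁻¹ • (a * x + π (a * x)) + a)) = π (exp1 F ν x) := by
  have hann (z y : N) : π z * y = 0 := hrange ⟨z, rfl⟩ y
  refine ⟨Module.End.bijective_sub_add_of_isNilpotent ⟨3, rhoMulLeft_pow_three hann ha⟩ a,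
    fun x => ?_⟩
  have hnil' : pw F N (ν + 3) = ⊥ := eq_bot_iff.2 (hnil ▸ pw_antitone (by omega))
  have hexp (y : N) : exp1 F ν y = exp1 F (ν + 2) y := (exp1_eq_of_le hnil (by omega) y).symm
  change π (exp1 F ν (x - rhoMulLeft π a x + a)) = _
  rw [hexp, hexp, exp1_sub_rhoMulLeft_add hann ha hnil', ← hexp, ← hexp, map_sub, map_add,
    map_add, haS, map_rhoMulLeft hproj, mul_comm, add_zero, add_sub_cancel_right]

/-- With `N` commutative nilpotent (nil-index `ν`), `π` a projection with range
in `Ann(N)`, `ρ = (id + π)/2`, `f = π ∘ exp₁`, and `a ∈ N_{[3]}` with `f(a) = 0`, the map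
`h_a(x) = x − ρ(a·x) + a` is an invertible affine map of `N` with `f ∘ h_a = f`. -/
theorem stmt6 {F N : Type*} [Field F] [CharZero F] [NonUnitalCommRing N] [Module F N]
    [SMulCommClass F N N] [IsScalarTower F N N] [FiniteDimensional F N]
    (ν : ℕ) (hnil : pw F N (ν + 1) = ⊥)
    (π : N →ₗ[F] N) (hproj : π ∘ₗ π = π) (hrange : LinearMap.range π ≤ annSub F N)
    (a : N) (ha : ∀ y ∈ pw F N 3, a * y = 0) (haS : π (exp1 F ν a) = 0) :
    Function.Bijective (fun x : N => x - (2 : F)⁻¹ • (a * x + π (a * x)) + a) ∧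
      ∀ x : N, π (exp1 F ν (x - (2 : F)⁻¹ • (a * x + π (a * x)) + a)) = π (exp1 F ν x) :=
  stmt6_general ν hnil π hproj hrange a ha haS
end

section
/- Let N be a finite-dimensional commutative nilpotent algebra over F (char 0) with nil-index ≤ 3 and projection π with range in Ann(N). Then the hypersurface S_π = {x ∈ N : π(exp₁ x) = 0} is affinely homogeneous: the group of affine bijections of N stabilizing S_π acts transitively on S_π. -/
lemma exp1_eq3 {F N : Type*} [Field F] [NonUnitalNonAssocRing N] [Module F N] (x : N) :
    exp1 F 3 x = x + (2:F)⁻¹ • (x*x) + (6:F)⁻¹ • (x*(x*x)) := by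
  simp [exp1, Finset.sum_range_succ, npw, Nat.factorial]
  norm_num
  rw [show (6:F)⁻¹ = 2⁻¹*3⁻¹ by rw [← mul_inv]; norm_num]

noncomputable def Mmap {F N : Type*} [Field F] [NonUnitalCommRing N] [Module F N]
    [SMulCommClass F N N] [IsScalarTower F N N] (π : N →ₗ[F] N) (u : N) : N →ₗ[F] N :=
  (-(2:F)⁻¹) • (LinearMap.mulRight F u + π ∘ₗ LinearMap.mulRight F u)

noncomputable def Lmap {F N : Type*} [Field F] [NonUnitalCommRing N] [Module F N]
    [SMulCommClass F N N] [IsScalarTower F N N] (π : N →ₗ[F] N) (u : N) : N →ₗ[F] N :=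
  LinearMap.id + Mmap π u

lemma Mmap_apply {F N : Type*} [Field F] [NonUnitalCommRing N] [Module F N]
    [SMulCommClass F N N] [IsScalarTower F N N] (π : N →ₗ[F] N) (u x : N) :
    Mmap π u x = (-(2:F)⁻¹) • (x * u + π (x * u)) := by
  simp [Mmap]

lemma Lmap_apply {F N : Type*} [Field F] [NonUnitalCommRing N] [Module F N]
    [SMulCommClass F N N] [IsScalarTower F N N] (π : N →ₗ[F] N) (u x : N) :
    Lmap π u x = x + (-(2:F)⁻¹) • (x * u + π (x * u)) := by
  simp [Lmap, Mmap]

lemma M3zero {F N : Type*} [Field F] [NonUnitalCommRing N] [Module F N]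
    [SMulCommClass F N N] [IsScalarTower F N N] (π : N →ₗ[F] N)
    (hann : ∀ a b : N, π a * b = 0)
    (d4 : ∀ a b c d : N, a * (b * (c * d)) = 0) (u x : N) :
    Mmap π u (Mmap π u (Mmap π u x)) = 0 := by
  simp only [Mmap_apply, smul_add, add_mul, smul_mul_assoc, hann, smul_zero, add_zero,
    map_add, map_smul, smul_smul]
  simp only [mul_assoc, mul_comm, mul_left_comm, d4, mul_zero, zero_mul, smul_zero, add_zero,
    zero_add, map_zero]

lemma keyid {F N : Type*} [Field F] [CharZero F] [NonUnitalCommRing N] [Module F N]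
    [SMulCommClass F N N] [IsScalarTower F N N] (π : N →ₗ[F] N)
    (hpp : ∀ a : N, π (π a) = π a)
    (hann : ∀ a b : N, π a * b = 0)
    (d4 : ∀ a b c d : N, a * (b * (c * d)) = 0) (u x : N) :
    π (exp1 F 3 (Lmap π u x + u)) = π (exp1 F 3 x) + π (exp1 F 3 u) := by
  have hann' : ∀ a b : N, b * π a = 0 := fun a b => by rw [mul_comm]; exact hann a b
  rw [exp1_eq3, exp1_eq3, exp1_eq3, Lmap_apply]
  simp only [smul_add, mul_add, add_mul, smul_mul_assoc, mul_smul_comm, smul_smul,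
    hann, hann', smul_zero, add_zero, zero_add, mul_zero, zero_mul]
  simp only [mul_assoc, mul_comm, mul_left_comm, d4, mul_zero, zero_mul, smul_zero,
    add_zero, zero_add]
  simp only [map_add, map_smul, hpp, map_zero]
  match_scalars <;> norm_num

noncomputable def Linv {F N : Type*} [Field F] [NonUnitalCommRing N] [Module F N]
    [SMulCommClass F N N] [IsScalarTower F N N] (π : N →ₗ[F] N) (u : N) : N →ₗ[F] N :=
  LinearMap.id - Mmap π u + Mmap π u ∘ₗ Mmap π u

lemma comp1 {F N : Type*} [Field F] [NonUnitalCommRing N] [Module F N]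
    [SMulCommClass F N N] [IsScalarTower F N N] (π : N →ₗ[F] N)
    (hann : ∀ a b : N, π a * b = 0)
    (d4 : ∀ a b c d : N, a * (b * (c * d)) = 0) (u : N) :
    Lmap π u ∘ₗ Linv π u = LinearMap.id := by
  ext x
  simp only [LinearMap.comp_apply, Lmap, Linv, LinearMap.add_apply, LinearMap.sub_apply,
    LinearMap.id_apply, map_add, map_sub, M3zero π hann d4, LinearMap.coe_comp,
    Function.comp_apply]
  abel

lemma comp2 {F N : Type*} [Field F] [NonUnitalCommRing N] [Module F N]
    [SMulCommClass F N N] [IsScalarTower F N N] (π : N →ₗ[F] N)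
    (hann : ∀ a b : N, π a * b = 0)
    (d4 : ∀ a b c d : N, a * (b * (c * d)) = 0) (u : N) :
    Linv π u ∘ₗ Lmap π u = LinearMap.id := by
  ext x
  simp only [LinearMap.comp_apply, Lmap, Linv, LinearMap.add_apply, LinearMap.sub_apply,
    LinearMap.id_apply, map_add, map_sub, M3zero π hann d4, LinearMap.coe_comp,
    Function.comp_apply]
  abel


/-- Let `N` be a finite-dimensional commutative nilpotent algebra over `F`
(char 0) with `N⁴ = 0` (nil-index ≤ 3) and `π` a projection with range in `Ann(N)`.  Then
`S_π = {x | π(exp₁ x) = 0}` (here `exp₁ x = x + x²/2 + x³/6`) is affinely homogeneous: for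
any `s, t ∈ S_π` there is an affine bijection of `N` stabilizing `S_π` and sending `s` to
`t`. -/
theorem stmt7 {F N : Type*} [Field F] [CharZero F] [NonUnitalCommRing N] [Module F N]
    [SMulCommClass F N N] [IsScalarTower F N N] [FiniteDimensional F N]
    (h4 : pw F N 4 = ⊥)
    (π : N →ₗ[F] N) (hproj : π ∘ₗ π = π) (hrange : LinearMap.range π ≤ annSub F N) :
    ∀ s t : N, π (exp1 F 3 s) = 0 → π (exp1 F 3 t) = 0 →
      ∃ (g : N ≃ₗ[F] N) (b : N),
        (∀ x : N, π (exp1 F 3 x) = 0 ↔ π (exp1 F 3 (g x + b)) = 0) ∧ g s + b = t := by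
  intro s t hs ht
  have hann : ∀ a b : N, π a * b = 0 := fun a b =>
    hrange (LinearMap.mem_range_self π a) b
  have hpp : ∀ a : N, π (π a) = π a := fun a => LinearMap.ext_iff.mp hproj a
  have d4 : ∀ a b c d : N, a * (b * (c * d)) = 0 := by
    intro a b c d
    have h1 : c * d ∈ pw F N 2 := Submodule.subset_span ⟨c, d, Submodule.mem_top, rfl⟩
    have h2 : b * (c * d) ∈ pw F N 3 := Submodule.subset_span ⟨b, _, h1, rfl⟩
    have h3 : a * (b * (c * d)) ∈ pw F N 4 := Submodule.subset_span ⟨a, _, h2, rfl⟩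
    rw [h4] at h3
    simpa using h3
  let e : N → (N ≃ₗ[F] N) := fun u =>
    LinearEquiv.ofLinear (Lmap π u) (Linv π u) (comp1 π hann d4 u) (comp2 π hann d4 u)
  have he : ∀ u z, e u z = Lmap π u z := fun u z => rfl
  set g : N ≃ₗ[F] N := (e s).symm.trans (e t) with hg
  refine ⟨g, t - g s, ?_, by abel⟩
  intro x
  set z : N := (e s).symm x - (e s).symm s with hz
  have hxz : x = Lmap π s z + s := by
    have : e s z = x - s := by rw [hz, map_sub]; simp
    rw [← he s z, this]; abel
  have hgz : g x + (t - g s) = Lmap π t z + t := by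
    have : g x - g s = e t z := by
      rw [hg, hz, map_sub]
      simp [LinearEquiv.trans_apply]
    rw [← he t z, ← this]; abel
  rw [hgz, hxz, keyid π hpp hann d4 s z, keyid π hpp hann d4 t z, hs, ht]
end

section
/- Let N be an admissible algebra with pointing ω (a linear form with ω(Ann(N)) = F), W := ker(ω), and define the symmetric bilinear form ω₂(x,y) = ω(xy) and trilinear form ω₃(x,y,z) = ω(xyz) on W. Define a product x∙y on W by ω₂(x∙y, z) = ω₃(x,y,z) for all z ∈ W (well-defined since ω₂ is non-degenerate on W), and on W ⊕ F the product (x,s)(y,t) := (x∙y, ω₂(x,y)). Then the linear map W ⊕ F → N, (x,s) ↦ x + ψ(s), where ψ : F → Ann(N) is the unique linear isomorphism with ψ∘ω equal to the projection of N = W ⊕ Ann(N) onto Ann(N), is an algebra isomorphism. -/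
/-! Since `Ann(N)` is a line on which `ω` does not vanish, `N = W ⊕ Ann(N)` and `(x, s) ↦ x + ψ s`
is the corresponding linear isomorphism. As `ψ` lands in `Ann(N)`, `(x + ψ s)(y + ψ t) = xy`, and
`xy - x∙y - π(xy)` lies in `W` and is `ω₂`-orthogonal to `W`. It vanishes because `ω₂` is
non-degenerate on `W`: in a nilpotent algebra every element outside `Ann(N)` has a nonzero
multiple in `Ann(N)`, and `Ann(N) ∩ W = 0`. -/

open LinearMap (ker)

theorem Submodule.disjoint_ker_of_finrank_eq_one {K V : Type*} [Field K] [AddCommGroup V]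
    [Module K V] {p : Submodule K V} (hp : Module.finrank K p = 1) {f : V →ₗ[K] K} {a : V}
    (ha : a ∈ p) (hfa : f a ≠ 0) : Disjoint p (ker f) := by
  have ha0 : (⟨a, ha⟩ : p) ≠ 0 := fun h => hfa <| by simp [show a = 0 from congrArg Subtype.val h]
  refine Submodule.disjoint_def.2 fun b hb hfb => ?_
  obtain ⟨c, hc⟩ := (finrank_eq_one_iff_of_nonzero' _ ha0).mp hp ⟨b, hb⟩
  obtain rfl : c • a = b := congrArg Subtype.val hc
  have hc0 : c = 0 := by simpa [hfa] using hfb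
  simp [hc0]

theorem LinearMap.bijective_add_of_leftInverse {R M M₂ : Type*} [Ring R] [AddCommGroup M]
    [AddCommGroup M₂] [Module R M] [Module R M₂] {ω : M →ₗ[R] M₂} {ψ : M₂ → M}
    (h : Function.LeftInverse ω ψ) :
    Function.Bijective (fun p : ker ω × M₂ => (p.1 : M) + ψ p.2) := by
  refine ⟨fun ⟨x, s⟩ ⟨y, t⟩ hxy => ?_, fun n => ?_⟩
  · have hst : s = t := by simpa [h s, h t] using congrArg ω hxy
    subst hst
    exact Prod.ext (Subtype.ext (add_right_cancel hxy)) rfl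
  · exact ⟨(⟨n - ψ (ω n), by simp [h (ω n)]⟩, ω n), sub_add_cancel n _⟩

theorem LinearMap.comp_eq_self_of_idempotent_of_ker_le {R M M₂ : Type*} [Ring R]
    [AddCommGroup M] [AddCommGroup M₂] [Module R M] [Module R M₂] {π : M →ₗ[R] M}
    {ω : M →ₗ[R] M₂} (hproj : π ∘ₗ π = π) (hker : ker π ≤ ker ω) : ω ∘ₗ π = ω := by
  ext n
  have hn : n - π n ∈ ker π := by simp [← LinearMap.comp_apply, hproj]
  have hωn := hker hn
  rw [LinearMap.mem_ker, map_sub, sub_eq_zero] at hωn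
  exact hωn.symm

theorem mul_mem_pw_succ_succ {F N : Type*} [Field F] [NonUnitalNonAssocRing N] [Module F N]
    (x : N) {y : N} {k : ℕ} (hy : y ∈ pw F N (k + 1)) : x * y ∈ pw F N (k + 2) :=
  Submodule.subset_span ⟨x, y, hy, rfl⟩

section Nilpotent

variable {F N : Type*} [Field F] [NonUnitalCommRing N] [Module F N]
  [SMulCommClass F N N] [IsScalarTower F N N]

theorem add_mul_add_of_mem_annSub (x y : N) {b c : N} (hb : b ∈ annSub F N)
    (hc : c ∈ annSub F N) : (x + b) * (y + c) = x * y := by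
  rw [add_mul, mul_add, mul_add, mul_comm x c, hc x, hb y, hb c]
  simp

theorem mem_annSub_of_forall_mul_mem_annSub_eq_zero (hnil : ∃ m : ℕ, pw F N (m + 1) = ⊥)
    {v : N} (hv : ∀ y, v * y ∈ annSub F N → v * y = 0) : v ∈ annSub F N := by
  obtain ⟨M, hM⟩ := hnil
  -- downward induction from `N^(M+1) = 0` down to `N^1 = N`
  have hpw : ∀ k ≤ M, ∀ y ∈ pw F N (k + 1), v * y = 0 := by
    intro k hk
    induction hk using Nat.decreasingInduction with
    | self => simp [hM]
    | of_succ k _ ih =>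
      refine fun y hy => hv y fun z => ?_
      rw [mul_assoc, mul_comm y z]
      exact ih _ (mul_mem_pw_succ_succ z hy)
  exact fun y => hpw 0 M.zero_le y trivial

theorem eq_zero_of_forall_mul_mem_ker (hAnn : Module.finrank F (annSub F N) = 1)
    (hnil : ∃ m : ℕ, pw F N (m + 1) = ⊥) (ω : N →ₗ[F] F) (hω : ∃ a ∈ annSub F N, ω a ≠ 0)
    {v : N} (hv : v ∈ ker ω) (hvW : ∀ z ∈ ker ω, v * z ∈ ker ω) : v = 0 := by
  obtain ⟨a, ha, hωa⟩ := hω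
  have hdisj := Submodule.disjoint_def.1 (Submodule.disjoint_ker_of_finrank_eq_one hAnn ha hωa)
  have hvN : ∀ n, v * n ∈ ker ω := by
    intro n
    -- `n` differs from an element of `ker ω` by a multiple of `a`, which `v` kills
    have hn : n - (ω n / ω a) • a ∈ ker ω := by simp [hωa]
    simpa [mul_sub, mul_smul_comm, mul_comm v a, ha v] using hvW _ hn
  have hvAnn : v ∈ annSub F N :=
    mem_annSub_of_forall_mul_mem_annSub_eq_zero hnil fun y hy => hdisj _ hy (hvN y)
  exact hdisj v hvAnn hv

end Nilpotent

theorem stmt13_general {F N : Type*} [Field F] [NonUnitalCommRing N] [Module F N]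
    [SMulCommClass F N N] [IsScalarTower F N N]
    (hAnn : Module.finrank F (annSub F N) = 1)
    (hnil : ∃ m : ℕ, pw F N (m + 1) = ⊥)
    (ω : N →ₗ[F] F) (hω : ∃ a ∈ annSub F N, ω a ≠ 0)
    (π : N →ₗ[F] N) (hproj : π ∘ₗ π = π) (hrange : LinearMap.range π = annSub F N)
    (hker : LinearMap.ker π = LinearMap.ker ω)
    (ψ : F →ₗ[F] N) (hψ : ∀ x : N, ψ (ω x) = π x)
    (m : ↥(LinearMap.ker ω) → ↥(LinearMap.ker ω) → ↥(LinearMap.ker ω))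
    (hm : ∀ x y z : ↥(LinearMap.ker ω), ω ((m x y : N) * z) = ω (((x : N) * y) * z)) :
    Function.Bijective (fun p : ↥(LinearMap.ker ω) × F => (p.1 : N) + ψ p.2) ∧
      ∀ (x y : ↥(LinearMap.ker ω)) (s t : F),
        ((x : N) + ψ s) * ((y : N) + ψ t) = (m x y : N) + ψ (ω ((x : N) * y)) := by
  have hωπ : ∀ n, ω (π n) = ω n :=
    LinearMap.congr_fun (LinearMap.comp_eq_self_of_idempotent_of_ker_le hproj hker.le)
  have hωsurj : Function.Surjective ω :=
    LinearMap.surjective fun h => by obtain ⟨a, -, ha⟩ := hω; simp [h] at ha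
  have hleft : Function.LeftInverse ω ψ := fun s => by
    obtain ⟨n, rfl⟩ := hωsurj s
    rw [hψ, hωπ]
  have hπAnn : ∀ n, π n ∈ annSub F N := fun n => hrange ▸ LinearMap.mem_range_self π n
  have hψAnn : ∀ s, ψ s ∈ annSub F N := fun s => by
    obtain ⟨n, rfl⟩ := hωsurj s
    rw [hψ]
    exact hπAnn n
  refine ⟨LinearMap.bijective_add_of_leftInverse hleft, fun x y s t => ?_⟩
  rw [add_mul_add_of_mem_annSub _ _ (hψAnn s) (hψAnn t), hψ, ← sub_eq_zero]
  refine eq_zero_of_forall_mul_mem_ker hAnn hnil ω hω ?_ fun z hz => ?_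
  · simp [hωπ]
  · simp [sub_mul, add_mul, hπAnn _ z, hm x y ⟨z, hz⟩]

/-- Let `N` be an admissible algebra with pointing `ω`, `W = ker ω`, and let
`x∙y` (`m` below) be the product on `W` characterized by `ω₂(x∙y, z) = ω₃(x,y,z)`, i.e.
`ω((x∙y)·z) = ω((x·y)·z)` for all `z ∈ W`.  Let `π` be the projection of `N = W ⊕ Ann(N)`
onto `Ann(N)` and `ψ : F → Ann(N)` the linear isomorphism with `ψ ∘ ω = π`.  Then
`(x, s) ↦ x + ψ(s)` is an algebra isomorphism from `W ⊕ F` with product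
`(x,s)(y,t) = (x∙y, ω₂(x,y))` onto `N`. -/
theorem stmt13 {F N : Type*} [Field F] [CharZero F] [NonUnitalCommRing N] [Module F N]
    [SMulCommClass F N N] [IsScalarTower F N N] [FiniteDimensional F N]
    (hAnn : Module.finrank F (annSub F N) = 1)
    (hnil : ∃ m : ℕ, pw F N (m + 1) = ⊥)
    (ω : N →ₗ[F] F) (hω : ∃ a ∈ annSub F N, ω a ≠ 0)
    (π : N →ₗ[F] N) (hproj : π ∘ₗ π = π) (hrange : LinearMap.range π = annSub F N)
    (hker : LinearMap.ker π = LinearMap.ker ω)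
    (ψ : F →ₗ[F] N) (hψ : ∀ x : N, ψ (ω x) = π x)
    (m : ↥(LinearMap.ker ω) → ↥(LinearMap.ker ω) → ↥(LinearMap.ker ω))
    (hm : ∀ x y z : ↥(LinearMap.ker ω), ω ((m x y : N) * z) = ω (((x : N) * y) * z)) :
    Function.Bijective (fun p : ↥(LinearMap.ker ω) × F => (p.1 : N) + ψ p.2) ∧
      ∀ (x y : ↥(LinearMap.ker ω)) (s t : F),
        ((x : N) + ψ s) * ((y : N) + ψ t) = (m x y : N) + ψ (ω ((x : N) * y)) :=
  stmt13_general hAnn hnil ω hω π hproj hrange hker ψ hψ m hm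
end

section
/- Let W be a finite-dimensional vector space over F (char 0) with a non-degenerate quadratic form q, and suppose W = W₁ ⊕ W₂ with both W₁ and W₂ totally isotropic for q. Let c be any cubic form on W₁, extended to W by c(x+y) := c(x) for x ∈ W₁, y ∈ W₂. Define the commutative product x∙y on W by b(x∙y, z) = ω₃(x,y,z), where b is the polarization of q and ω₃ the symmetric trilinear polarization of c. Then this product is associative and satisfies (x∙y)∙z = 0 for all x,y,z ∈ W; in particular p := q + c is a nil-polynomial (the cubic part of the product satisfies W∙W ⊆ W₂ and W∙W₂ = 0). -/
/-!
Since `W₁` and `W₂` are complementary and totally isotropic, a vector orthogonal to `W₂` lies in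
`W₂`. As `ω₃` vanishes as soon as one argument lies in `W₂`, every product `x∙y` is orthogonal to
`W₂`, hence lies in `W₂`, and products with a factor in `W₂` vanish by non-degeneracy. So both
`(x∙y)∙z` and `x∙(y∙z)` are zero.
-/

section

variable {R M : Type*} [CommSemiring R] [AddCommMonoid M] [Module R M]
  {W₁ W₂ : Submodule R M} {b : M →ₗ[R] M →ₗ[R] R}

theorem Submodule.mem_of_isCompl_of_forall_apply_eq_zero (hcompl : IsCompl W₁ W₂)
    (hnd : ∀ x : M, (∀ y : M, b x y = 0) → x = 0)
    (hW₁ : ∀ x ∈ W₁, ∀ y ∈ W₁, b x y = 0) (hW₂ : ∀ x ∈ W₂, ∀ y ∈ W₂, b x y = 0)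
    {v : M} (hv : ∀ w ∈ W₂, b v w = 0) : v ∈ W₂ := by
  obtain ⟨v₁, v₂, hv₁, hv₂, rfl⟩ :=
    Submodule.codisjoint_iff_exists_add_eq.mp hcompl.codisjoint v
  suffices hv₁_zero : v₁ = 0 by rwa [hv₁_zero, zero_add]
  refine hnd v₁ fun u => ?_
  obtain ⟨u₁, u₂, hu₁, hu₂, rfl⟩ :=
    Submodule.codisjoint_iff_exists_add_eq.mp hcompl.codisjoint u
  have hv₁u₂ : b v₁ u₂ = 0 := by
    simpa [hW₂ v₂ hv₂ u₂ hu₂] using hv u₂ hu₂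
  rw [map_add, hW₁ v₁ hv₁ u₁ hu₁, hv₁u₂, add_zero]

variable {ω₃ : M →ₗ[R] M →ₗ[R] M →ₗ[R] R} {m : M → M → M}

theorem mul_eq_zero_of_left_mem (hnd : ∀ x : M, (∀ y : M, b x y = 0) → x = 0)
    (hωW₂ : ∀ z ∈ W₂, ∀ x y : M, ω₃ z x y = 0) (hm : ∀ x y z : M, b (m x y) z = ω₃ x y z)
    {x : M} (hx : x ∈ W₂) (y : M) : m x y = 0 :=
  hnd _ fun z => (hm x y z).trans (hωW₂ x hx y z)

theorem mul_eq_zero_of_right_mem (hnd : ∀ x : M, (∀ y : M, b x y = 0) → x = 0)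
    (hωsymm₁ : ∀ x y z : M, ω₃ x y z = ω₃ y x z)
    (hωW₂ : ∀ z ∈ W₂, ∀ x y : M, ω₃ z x y = 0) (hm : ∀ x y z : M, b (m x y) z = ω₃ x y z)
    (x : M) {y : M} (hy : y ∈ W₂) : m x y = 0 :=
  hnd _ fun z => by rw [hm, hωsymm₁, hωW₂ y hy]

theorem mul_mem_of_isCompl (hcompl : IsCompl W₁ W₂)
    (hnd : ∀ x : M, (∀ y : M, b x y = 0) → x = 0)
    (hW₁ : ∀ x ∈ W₁, ∀ y ∈ W₁, b x y = 0) (hW₂ : ∀ x ∈ W₂, ∀ y ∈ W₂, b x y = 0)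
    (hωsymm₁ : ∀ x y z : M, ω₃ x y z = ω₃ y x z) (hωsymm₂ : ∀ x y z : M, ω₃ x y z = ω₃ x z y)
    (hωW₂ : ∀ z ∈ W₂, ∀ x y : M, ω₃ z x y = 0) (hm : ∀ x y z : M, b (m x y) z = ω₃ x y z)
    (x y : M) : m x y ∈ W₂ :=
  Submodule.mem_of_isCompl_of_forall_apply_eq_zero hcompl hnd hW₁ hW₂ fun w hw => by
    rw [hm, hωsymm₂, hωsymm₁, hωW₂ w hw]

end

theorem stmt19_general {F W : Type*} [Field F]
    [AddCommGroup W] [Module F W]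
    (W₁ W₂ : Submodule F W) (hcompl : IsCompl W₁ W₂)
    (b : W →ₗ[F] W →ₗ[F] F)
    (hbnondeg : ∀ x : W, (∀ y : W, b x y = 0) → x = 0)
    (hW₁iso : ∀ x ∈ W₁, ∀ y ∈ W₁, b x y = 0)
    (hW₂iso : ∀ x ∈ W₂, ∀ y ∈ W₂, b x y = 0)
    (ω₃ : W →ₗ[F] W →ₗ[F] W →ₗ[F] F)
    (hωsymm₁ : ∀ x y z : W, ω₃ x y z = ω₃ y x z)
    (hωsymm₂ : ∀ x y z : W, ω₃ x y z = ω₃ x z y)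
    (hωW₂ : ∀ z ∈ W₂, ∀ x y : W, ω₃ z x y = 0)
    (m : W → W → W)
    (hm : ∀ x y z : W, b (m x y) z = ω₃ x y z) :
    (∀ x y : W, m x y ∈ W₂) ∧
    (∀ x y : W, y ∈ W₂ → m x y = 0) ∧
    (∀ x y z : W, m (m x y) z = 0) ∧
    (∀ x y z : W, m (m x y) z = m x (m y z)) := by
  have hmem := mul_mem_of_isCompl hcompl hbnondeg hW₁iso hW₂iso hωsymm₁ hωsymm₂ hωW₂ hm
  have htriple (x y z : W) : m (m x y) z = 0 :=
    mul_eq_zero_of_left_mem hbnondeg hωW₂ hm (hmem x y) z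
  have hright (x : W) {y : W} (hy : y ∈ W₂) : m x y = 0 :=
    mul_eq_zero_of_right_mem hbnondeg hωsymm₁ hωW₂ hm x hy
  refine ⟨hmem, fun x _ hy => hright x hy, htriple, fun x y z => ?_⟩
  rw [htriple, hright x (hmem y z)]

/-- Let `W` be a finite-dimensional vector space over `F` (char 0) with a
non-degenerate symmetric bilinear form `b` (the polarization of a quadratic form `q`),
`W = W₁ ⊕ W₂` with both summands totally isotropic, and let `ω₃` be a symmetric trilinear
form vanishing whenever an argument lies in `W₂` (the polarization of a cubic form `c` on
`W₁` extended by `c(x + y) = c(x)`).  Let `x∙y` (`m` below) be the commutative product on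
`W` defined by `b(x∙y, z) = ω₃(x,y,z)`.  Then `W∙W ⊆ W₂`, `W∙W₂ = 0`, all triple products
`(x∙y)∙z` vanish and in particular the product is associative (so `p = q + c` is a
nil-polynomial). -/
theorem stmt19 {F W : Type*} [Field F] [CharZero F]
    [AddCommGroup W] [Module F W] [FiniteDimensional F W]
    (W₁ W₂ : Submodule F W) (hcompl : IsCompl W₁ W₂)
    (b : W →ₗ[F] W →ₗ[F] F)
    (hbsymm : ∀ x y : W, b x y = b y x)
    (hbnondeg : ∀ x : W, (∀ y : W, b x y = 0) → x = 0)
    (hW₁iso : ∀ x ∈ W₁, ∀ y ∈ W₁, b x y = 0)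
    (hW₂iso : ∀ x ∈ W₂, ∀ y ∈ W₂, b x y = 0)
    (ω₃ : W →ₗ[F] W →ₗ[F] W →ₗ[F] F)
    (hωsymm₁ : ∀ x y z : W, ω₃ x y z = ω₃ y x z)
    (hωsymm₂ : ∀ x y z : W, ω₃ x y z = ω₃ x z y)
    (hωW₂ : ∀ z ∈ W₂, ∀ x y : W, ω₃ z x y = 0)
    (m : W → W → W)
    (hm : ∀ x y z : W, b (m x y) z = ω₃ x y z) :
    (∀ x y : W, m x y ∈ W₂) ∧
    (∀ x y : W, y ∈ W₂ → m x y = 0) ∧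
    (∀ x y z : W, m (m x y) z = 0) ∧
    (∀ x y z : W, m (m x y) z = m x (m y z)) :=
  stmt19_general W₁ W₂ hcompl b hbnondeg hW₁iso hW₂iso ω₃ hωsymm₁ hωsymm₂ hωW₂ m hm
end
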